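/- arXiv:1308.2905 — 3 statements merged into one kernel-verified Lean document; each statement's English description precedes it below -/
import Mathlib

section
/- If 0 < a < b < 1/2, then there are at most finitely many integers n ≥ 3 such that every n-cycle of the doubling map T intersects the open interval (a,b). Equivalently, for all sufficiently large n there is an n-cycle of T disjoint from (a,b). -/
noncomputable def T (x : ℝ) : ℝ := if x ≤ 1/2 then 2*x else 2*x - 1

/-- `C` is an `n`-cycle (periodic orbit of prime period `n`) for the doubling map. -/
def IsCycle (n : ℕ) (C : Set ℝ) : Prop :=
  ∃ x : ℝ, x ∈ Set.Icc (0:ℝ) 1 ∧ T^[n] x = x ∧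
    (∀ i < n, ∀ j < n, i ≠ j → T^[i] x ≠ T^[j] x) ∧
    C = {y | ∃ i < n, T^[i] x = y}

/-! The `n`-cycle of the point with periodic binary expansion `0.(1…10)`, i.e. `1 - 1/(2ⁿ - 1)`:
its points are `1 - 2ᵏ/(2ⁿ - 1)` for `k < n`, and the smallest one, `1/2 - 1/(2(2ⁿ - 1))`, tends
to `1/2` from below. So for every `b < 1/2` and all large `n` this cycle avoids `(0, b)`. -/

open Filter

noncomputable def cyclePoint (n k : ℕ) : ℝ := 1 - 2 ^ k / (2 ^ n - 1)

lemma one_le_two_pow_sub_one {n : ℕ} (hn : 1 ≤ n) : (1 : ℝ) ≤ 2 ^ n - 1 := by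
  have : (2 : ℝ) ^ 1 ≤ 2 ^ n := pow_le_pow_right₀ one_le_two hn
  linarith

lemma T_cyclePoint_of_succ_lt {n k : ℕ} (hk : k + 1 < n) :
    T (cyclePoint n k) = cyclePoint n (k + 1) := by
  have hD := one_le_two_pow_sub_one (n := n) (by omega)
  have hpow : (2 : ℝ) ^ k * 2 * 2 ≤ 2 ^ n := by
    rw [← pow_succ, ← pow_succ]
    exact pow_le_pow_right₀ one_le_two hk
  have hgt : ¬ cyclePoint n k ≤ 1 / 2 := by
    have : (1 : ℝ) ≤ 2 ^ k := one_le_pow₀ one_le_two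
    rw [not_le, cyclePoint, lt_sub_comm, div_lt_iff₀ (by linarith)]
    linarith
  rw [T, if_neg hgt, cyclePoint, cyclePoint, pow_succ]
  ring

lemma T_cyclePoint_last (k : ℕ) : T (cyclePoint (k + 1) k) = cyclePoint (k + 1) 0 := by
  have hD := one_le_two_pow_sub_one (n := k + 1) (by omega)
  have hle : cyclePoint (k + 1) k ≤ 1 / 2 := by
    rw [cyclePoint, sub_le_comm, le_div_iff₀ (by linarith), pow_succ]
    linarith
  rw [T, if_pos hle, cyclePoint, cyclePoint]
  field_simp
  ring

lemma iterate_T_cyclePoint_zero {n i : ℕ} (hi : i < n) :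
    T^[i] (cyclePoint n 0) = cyclePoint n i := by
  induction i with
  | zero => rfl
  | succ i ih =>
    rw [Function.iterate_succ_apply', ih (by omega), T_cyclePoint_of_succ_lt hi]

lemma iterate_T_cyclePoint_period {n : ℕ} (hn : 1 ≤ n) :
    T^[n] (cyclePoint n 0) = cyclePoint n 0 := by
  obtain ⟨k, rfl⟩ : ∃ k, n = k + 1 := ⟨n - 1, by omega⟩
  rw [Function.iterate_succ_apply', iterate_T_cyclePoint_zero (Nat.lt_succ_self k),
    T_cyclePoint_last]

lemma cyclePoint_strictAnti {n : ℕ} (hn : 1 ≤ n) : StrictAnti (cyclePoint n) := by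
  intro i j hij
  have hD := one_le_two_pow_sub_one hn
  unfold cyclePoint
  gcongr
  linarith

lemma cyclePoint_zero_mem_Icc {n : ℕ} (hn : 1 ≤ n) : cyclePoint n 0 ∈ Set.Icc (0 : ℝ) 1 := by
  have hD := one_le_two_pow_sub_one hn
  rw [cyclePoint, pow_zero]
  constructor
  · rw [sub_nonneg, div_le_one (by linarith)]
    exact hD
  · simp only [sub_le_self_iff]
    positivity

lemma isCycle_cyclePoint_image {n : ℕ} (hn : 1 ≤ n) :
    IsCycle n (cyclePoint n '' Set.Iio n) := by
  refine ⟨cyclePoint n 0, cyclePoint_zero_mem_Icc hn, iterate_T_cyclePoint_period hn,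
    fun i hi j hj hij => ?_, ?_⟩
  · rw [iterate_T_cyclePoint_zero hi, iterate_T_cyclePoint_zero hj]
    exact (cyclePoint_strictAnti hn).injective.ne hij
  · ext y
    constructor
    · rintro ⟨i, hi, rfl⟩
      exact ⟨i, hi, iterate_T_cyclePoint_zero hi⟩
    · rintro ⟨i, hi, rfl⟩
      exact ⟨i, hi, (iterate_T_cyclePoint_zero hi).symm⟩

lemma half_sub_le_cyclePoint {n k : ℕ} (hk : k < n) :
    1 / 2 - 1 / (2 * (2 ^ n - 1)) ≤ cyclePoint n k := by
  have hD := one_le_two_pow_sub_one (n := n) (by omega)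
  have hpow : (2 : ℝ) ^ k ≤ 2 ^ n / 2 := by
    rw [le_div_iff₀ two_pos, ← pow_succ]
    exact pow_le_pow_right₀ one_le_two hk
  calc 1 / 2 - 1 / (2 * (2 ^ n - 1)) = 1 - 2 ^ n / 2 / (2 ^ n - 1) := by
        field_simp
        ring
    _ ≤ cyclePoint n k := by
        unfold cyclePoint
        gcongr

lemma eventually_lt_half_sub {b : ℝ} (hb : b < 1 / 2) :
    ∀ᶠ n : ℕ in atTop, b < 1 / 2 - 1 / (2 * (2 ^ n - 1)) := by
  have hD : Tendsto (fun n : ℕ => 2 * ((2 : ℝ) ^ n - 1)) atTop atTop :=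
    (tendsto_atTop_add_const_right _ (-1)
      (tendsto_pow_atTop_atTop_of_one_lt one_lt_two)).const_mul_atTop two_pos
  have hlim : Tendsto (fun n : ℕ => 1 / 2 - 1 / (2 * ((2 : ℝ) ^ n - 1))) atTop (nhds (1 / 2)) := by
    simpa using tendsto_const_nhds.sub (hD.inv_tendsto_atTop.congr fun n => (one_div _).symm)
  exact hlim.eventually_const_lt hb

theorem stmt_3_general (a b : ℝ) (hb : b < 1/2) :
    {n : ℕ | 3 ≤ n ∧ ∀ C : Set ℝ, IsCycle n C → (C ∩ Set.Ioo a b).Nonempty}.Finite := by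
  obtain ⟨N, hN⟩ := eventually_atTop.mp (eventually_lt_half_sub hb)
  refine (Set.finite_Iio N).subset fun n ⟨h3, hbad⟩ => ?_
  rw [Set.mem_Iio]
  by_contra! hn
  obtain ⟨_, ⟨k, hk, rfl⟩, hy⟩ := hbad _ (isCycle_cyclePoint_image (by omega))
  exact hy.2.not_ge ((hN n (by omega)).le.trans (half_sub_le_cyclePoint hk))

theorem stmt_3 (a b : ℝ) (ha : 0 < a) (hab : a < b) (hb : b < 1/2) :
    {n : ℕ | 3 ≤ n ∧ ∀ C : Set ℝ, IsCycle n C → (C ∩ Set.Ioo a b).Nonempty}.Finite :=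
  stmt_3_general a b hb
end

section
/- For every n ≥ 3, the point of [0,1] with periodic binary expansion (011 1^{n-3})^∞, i.e., x = (2^n - 2^{n-2} - 1)/(2^n - 1), generates an n-cycle of the doubling map T that is disjoint from the open interval (0, 3/7). -/
noncomputable def singleZeroPoint (n k : ℕ) : ℝ := 1 - 2 ^ (k % n) / (2 ^ n - 1)

section SingleZeroPoint

variable {n : ℕ}

lemma two_pow_sub_one_pos (hn : 0 < n) : (0 : ℝ) < 2 ^ n - 1 := by
  have : (1 : ℝ) < 2 ^ n := one_lt_pow₀ one_lt_two hn.ne'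
  linarith

lemma two_pow_pred_add_two_pow_pred (hn : 0 < n) : (2 : ℝ) ^ (n - 1) + 2 ^ (n - 1) = 2 ^ n := by
  rw [← two_mul, ← pow_succ', Nat.sub_add_cancel hn]

lemma two_pow_mod_le_two_pow_pred (hn : 0 < n) (k : ℕ) : (2 : ℝ) ^ (k % n) ≤ 2 ^ (n - 1) :=
  pow_le_pow_right₀ one_le_two (Nat.le_pred_of_lt (Nat.mod_lt k hn))

lemma singleZeroPoint_mem_Icc (hn : 0 < n) (k : ℕ) : singleZeroPoint n k ∈ Set.Icc (0 : ℝ) 1 := by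
  have hN := two_pow_sub_one_pos hn
  have hk := two_pow_mod_le_two_pow_pred hn k
  have hpow := two_pow_pred_add_two_pow_pred hn
  have hone : (1 : ℝ) ≤ 2 ^ (n - 1) := one_le_pow₀ one_le_two
  have hle : 2 ^ (k % n) / ((2 : ℝ) ^ n - 1) ≤ 1 := (div_le_one hN).2 (by linarith)
  have hnonneg : 0 ≤ 2 ^ (k % n) / ((2 : ℝ) ^ n - 1) := by positivity
  exact ⟨by unfold singleZeroPoint; linarith, by unfold singleZeroPoint; linarith⟩

lemma T_singleZeroPoint (hn : 0 < n) (k : ℕ) : T (singleZeroPoint n k) = singleZeroPoint n (k + 1) := by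
  have hN := two_pow_sub_one_pos hn
  have hpow := two_pow_pred_add_two_pow_pred hn
  have hone : (1 : ℝ) ≤ 2 ^ (k % n) := one_le_pow₀ one_le_two
  unfold T singleZeroPoint
  rw [← Nat.mod_add_mod]
  have hk := Nat.mod_lt k hn
  rcases (show k % n + 1 = n ∨ k % n + 1 < n by omega) with hlast | hinner
  · rw [hlast, Nat.mod_self, show k % n = n - 1 by omega, if_pos]
    · field_simp
      linarith
    · rw [sub_le_comm, le_div_iff₀ hN]
      linarith
  · have hdouble : (2 : ℝ) ^ (k % n + 1) ≤ 2 ^ (n - 1) := pow_le_pow_right₀ one_le_two (by omega)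
    rw [pow_succ] at hdouble
    rw [Nat.mod_eq_of_lt hinner, if_neg, pow_succ]
    · field_simp
      ring
    · rw [not_le, lt_sub_comm, div_lt_iff₀ hN]
      linarith

lemma iterate_T_singleZeroPoint (hn : 0 < n) (i k : ℕ) :
    T^[i] (singleZeroPoint n k) = singleZeroPoint n (k + i) := by
  induction i generalizing k with
  | zero => rfl
  | succ i ih =>
    rw [Function.iterate_succ_apply, T_singleZeroPoint hn, ih, Nat.add_assoc, Nat.add_comm 1 i]

lemma singleZeroPoint_eq_iff (hn : 0 < n) {a b : ℕ} :
    singleZeroPoint n a = singleZeroPoint n b ↔ a % n = b % n := by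
  refine ⟨fun h => ?_, fun h => by rw [singleZeroPoint, singleZeroPoint, h]⟩
  have hN := (two_pow_sub_one_pos hn).ne'
  unfold singleZeroPoint at h
  rw [sub_right_inj, div_left_inj' hN] at h
  exact Nat.pow_right_injective le_rfl (by exact_mod_cast h)

lemma three_div_seven_le_singleZeroPoint (hn : 3 ≤ n) (k : ℕ) : 3 / 7 ≤ singleZeroPoint n k := by
  have hn0 : 0 < n := by omega
  have hN := two_pow_sub_one_pos hn0
  have hpow := two_pow_pred_add_two_pow_pred hn0
  have hk := two_pow_mod_le_two_pow_pred hn0 k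
  have hfour : (2 : ℝ) ^ 2 ≤ 2 ^ (n - 1) := pow_le_pow_right₀ one_le_two (by omega)
  unfold singleZeroPoint
  rw [le_sub_comm, div_le_iff₀ hN]
  linarith

end SingleZeroPoint

theorem stmt_8 (n : ℕ) (hn : 3 ≤ n) :
    IsCycle n {y : ℝ | ∃ i < n, T^[i] (((2:ℝ)^n - 2^(n-2) - 1) / (2^n - 1)) = y} ∧
    {y : ℝ | ∃ i < n, T^[i] (((2:ℝ)^n - 2^(n-2) - 1) / (2^n - 1)) = y} ∩
      Set.Ioo (0:ℝ) (3/7) = ∅ := by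
  have hn0 : 0 < n := by omega
  have hx : ((2:ℝ)^n - 2^(n-2) - 1) / (2^n - 1) = singleZeroPoint n (n - 2) := by
    rw [singleZeroPoint, Nat.mod_eq_of_lt (by omega), eq_sub_iff_add_eq, ← add_div,
      div_eq_one_iff_eq (two_pow_sub_one_pos hn0).ne']
    ring
  rw [hx]
  refine ⟨⟨_, singleZeroPoint_mem_Icc hn0 _, ?_, fun i hi j hj hij h => hij ?_, rfl⟩, ?_⟩
  · rw [iterate_T_singleZeroPoint hn0, singleZeroPoint_eq_iff hn0, Nat.add_mod_right]
  · rw [iterate_T_singleZeroPoint hn0, iterate_T_singleZeroPoint hn0, singleZeroPoint_eq_iff hn0] at h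
    have hij' : i ≡ j [MOD n] := Nat.ModEq.add_left_cancel' (n - 2) h
    rwa [Nat.ModEq, Nat.mod_eq_of_lt hi, Nat.mod_eq_of_lt hj] at hij'
  · refine Set.eq_empty_of_forall_notMem ?_
    rintro _ ⟨⟨i, -, rfl⟩, -, hlt⟩
    rw [iterate_T_singleZeroPoint hn0] at hlt
    exact (three_div_seven_le_singleZeroPoint hn _).not_gt hlt
end

section
/- For every n ≥ 3 there exists an n-cycle of the doubling map T which is disjoint from the open interval (3/7, 4/7). -/
open Function Set

theorem Function.minimalPeriod_eq_of_iterate_ne {α : Type*} {f : α → α} {x : α} {n : ℕ}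
    (hn : 0 < n) (hper : f^[n] x = x) (hprim : ∀ p, 0 < p → p < n → f^[p] x ≠ x) :
    minimalPeriod f x = n :=
  (IsPeriodicPt.minimalPeriod_le hn hper).eq_of_not_lt fun hlt =>
    hprim _ (IsPeriodicPt.minimalPeriod_pos hn hper) hlt iterate_minimalPeriod

theorem isCycle_orbit_of_minimalPeriod_eq {n : ℕ} {x : ℝ} (hx : x ∈ Icc 0 1)
    (h : minimalPeriod T x = n) : IsCycle n {y | ∃ i < n, T^[i] x = y} := by
  subst h
  exact ⟨x, hx, iterate_minimalPeriod, fun i hi j hj hij heq =>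
    hij (iterate_injOn_Iio_minimalPeriod hi hj heq), rfl⟩

theorem exists_isCycle_inter_eq_empty {S : Set ℝ} {n : ℕ} {x : ℝ} (hx : x ∈ Icc 0 1)
    (hn : 0 < n) (hper : T^[n] x = x) (hxS : x ∉ S)
    (horbit : ∀ p, 0 < p → p < n → T^[p] x ≠ x ∧ T^[p] x ∉ S) :
    ∃ C, IsCycle n C ∧ C ∩ S = ∅ := by
  refine ⟨_, isCycle_orbit_of_minimalPeriod_eq hx (minimalPeriod_eq_of_iterate_ne hn hper
    fun p hp0 hp => (horbit p hp0 hp).1), eq_empty_of_forall_notMem ?_⟩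
  rintro _ ⟨⟨i, hi, rfl⟩, hiS⟩
  rcases i.eq_zero_or_pos with rfl | hi0
  · exact hxS hiS
  · exact (horbit i hi0 hi).2 hiS

theorem T_of_le {x : ℝ} (h : x ≤ 1/2) : T x = 2*x := if_pos h

theorem T_of_lt {x : ℝ} (h : 1/2 < x) : T x = 2*x - 1 := if_neg h.not_ge

theorem T_T_third_add {t : ℝ} (h₁ : -1/12 < t) (h₂ : t ≤ 1/6) :
    T (T (1/3 + t)) = 1/3 + 4*t := by
  rw [T_of_le (x := 1/3 + t) (by linarith), T_of_lt (by linarith)]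
  ring

theorem iterate_two_mul_T_third_add {t : ℝ} (j : ℕ) (h₁ : -1/3 < 4^j * t)
    (h₂ : 4^j * t ≤ 2/3) : T^[2*j] (1/3 + t) = 1/3 + 4^j * t := by
  induction j with
  | zero => simp
  | succ j ih =>
    rw [pow_succ] at h₁ h₂
    rw [show 2 * (j + 1) = 2 + 2 * j by ring, iterate_add_apply, ih (by linarith) (by linarith),
      iterate_succ_apply, iterate_one, T_T_third_add (by linarith) (by linarith), pow_succ]
    ring

section Odd

-- `2 * 4^k - 1 = 2^n - 1` for `n = 2k + 1`.
noncomputable def oddSeed (k : ℕ) : ℝ := 1/3 - 1/(3*(2*4^k - 1))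

variable {k : ℕ}

theorem iterate_two_mul_T_oddSeed (hk : 1 ≤ k) {j : ℕ} (hj : j ≤ k) :
    T^[2*j] (oddSeed k) = 1/3 - 4^j/(3*(2*4^k - 1)) := by
  have h4k : (4:ℝ) ≤ 4^k := le_self_pow₀ (by norm_num) (by omega)
  have hjk : (4:ℝ)^j ≤ 4^k := pow_le_pow_right₀ (by norm_num) hj
  have hlt : 4^j/(3*(2*4^k - 1)) < (1/3 : ℝ) := by
    rw [div_lt_iff₀ (by linarith)]
    linarith
  have hnn : 0 ≤ 4^j/(3*(2*4^k - 1) : ℝ) := div_nonneg (by positivity) (by linarith)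
  rw [oddSeed, sub_eq_add_neg, iterate_two_mul_T_third_add j] <;> rw [mul_neg, mul_one_div]
  · ring
  all_goals linarith

theorem iterate_two_mul_add_one_T_oddSeed (hk : 1 ≤ k) {j : ℕ} (hj : j ≤ k) :
    T^[2*j+1] (oddSeed k) = 2/3 - 2*4^j/(3*(2*4^k - 1)) := by
  have h4k : (4:ℝ) ≤ 4^k := le_self_pow₀ (by norm_num) (by omega)
  have hnn : 0 ≤ 4^j/(3*(2*4^k - 1) : ℝ) := div_nonneg (by positivity) (by linarith)
  rw [iterate_succ_apply', iterate_two_mul_T_oddSeed hk hj, T_of_le (by linarith)]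
  ring

theorem iterate_T_oddSeed_period (hk : 1 ≤ k) : T^[2*k+1] (oddSeed k) = oddSeed k := by
  have h4k : (4:ℝ) ≤ 4^k := le_self_pow₀ (by norm_num) (by omega)
  have hN : (2*4^k - 1 : ℝ) ≠ 0 := by linarith
  rw [iterate_two_mul_add_one_T_oddSeed hk le_rfl, oddSeed]
  field_simp
  ring

theorem iterate_T_oddSeed_lt_or_ge (hk : 1 ≤ k) {p : ℕ} (hp0 : 0 < p) (hp : p < 2*k+1) :
    T^[p] (oddSeed k) < oddSeed k ∨ 4/7 ≤ T^[p] (oddSeed k) := by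
  have h4k : (4:ℝ) ≤ 4^k := le_self_pow₀ (by norm_num) (by omega)
  obtain ⟨j, rfl | rfl⟩ := Nat.even_or_odd' p
  · have h : (1:ℝ) < 4^j := one_lt_pow₀ (by norm_num) (by omega)
    left
    rw [iterate_two_mul_T_oddSeed hk (by omega), oddSeed]
    linarith [div_lt_div_of_pos_right h (by linarith : (0:ℝ) < 3*(2*4^k - 1))]
  · have h : (4:ℝ)^j * 4 ≤ 4^k := by
      rw [← pow_succ]; exact pow_le_pow_right₀ (by norm_num) (by omega)
    have h1j : (1:ℝ) ≤ 4^j := one_le_pow₀ (by norm_num)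
    right
    rw [iterate_two_mul_add_one_T_oddSeed hk (by omega), le_sub_iff_add_le,
      ← le_sub_iff_add_le', div_le_iff₀ (by linarith)]
    linarith

theorem exists_isCycle_odd (hk : 1 ≤ k) :
    ∃ C, IsCycle (2*k+1) C ∧ C ∩ Ioo (3/7 : ℝ) (4/7) = ∅ := by
  have h4k : (4:ℝ) ≤ 4^k := le_self_pow₀ (by norm_num) (by omega)
  have hseed : 0 < 1/(3*(2*4^k - 1) : ℝ) := one_div_pos.2 (by linarith)
  have hx : oddSeed k < 3/7 := by rw [oddSeed]; linarith
  refine exists_isCycle_inter_eq_empty ⟨?_, ?_⟩ (by omega) (iterate_T_oddSeed_period hk)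
    (fun h => h.1.not_gt hx) fun p hp0 hp => ?_
  · rw [oddSeed, sub_nonneg, div_le_div_iff₀ (by linarith) (by norm_num)]
    linarith
  · rw [oddSeed]
    linarith
  rcases iterate_T_oddSeed_lt_or_ge hk hp0 hp with h | h
  · exact ⟨h.ne, fun hS => hS.1.not_gt (h.trans hx)⟩
  · exact ⟨(hx.trans_le (by norm_num) |>.trans_le h).ne', fun hS => hS.2.not_ge h⟩

end Odd

section Even

-- `16 * 4^k - 1 = 2^n - 1` for `n = 2k + 4`.
noncomputable def evenSeed (k : ℕ) : ℝ := 1/3 + 1/(16*4^k - 1)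

variable {k : ℕ}

theorem iterate_two_mul_T_evenSeed {j : ℕ} (hj : j ≤ k + 1) :
    T^[2*j] (evenSeed k) = 1/3 + 4^j/(16*4^k - 1) := by
  have h1k : (1:ℝ) ≤ 4^k := one_le_pow₀ (by norm_num)
  have hjk : (4:ℝ)^j ≤ 4^k * 4 := by
    rw [← pow_succ]; exact pow_le_pow_right₀ (by norm_num) hj
  have hnn : 0 ≤ 4^j/(16*4^k - 1 : ℝ) := div_nonneg (by positivity) (by linarith)
  have hle : 4^j/(16*4^k - 1 : ℝ) ≤ 2/3 := by rw [div_le_iff₀ (by linarith)]; linarith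
  rw [evenSeed, iterate_two_mul_T_third_add j] <;> rw [mul_one_div] <;> linarith

theorem iterate_two_mul_add_one_T_evenSeed {j : ℕ} (hj : j ≤ k) :
    T^[2*j+1] (evenSeed k) = 2/3 + 2*4^j/(16*4^k - 1) := by
  have h1k : (1:ℝ) ≤ 4^k := one_le_pow₀ (by norm_num)
  have hjk : (4:ℝ)^j ≤ 4^k := pow_le_pow_right₀ (by norm_num) hj
  have hle : 4^j/(16*4^k - 1 : ℝ) ≤ 1/6 := by rw [div_le_iff₀ (by linarith)]; linarith
  rw [iterate_succ_apply', iterate_two_mul_T_evenSeed (by omega), T_of_le (by linarith)]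
  ring

-- The orbit leaves the neighbourhood of `{1/3, 2/3}` here; one more doubling closes it.
theorem iterate_T_evenSeed_exit : T^[2*k+3] (evenSeed k) = 8*4^k/(16*4^k - 1) - 1/3 := by
  have h1k : (1:ℝ) ≤ 4^k := one_le_pow₀ (by norm_num)
  have hgt : 1/6 < 4^(k+1)/(16*4^k - 1 : ℝ) := by
    rw [lt_div_iff₀ (by linarith), pow_succ]; linarith
  rw [show 2*k+3 = 2*(k+1)+1 by ring, iterate_succ_apply', iterate_two_mul_T_evenSeed le_rfl,
    T_of_lt (by linarith), pow_succ]
  ring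

theorem iterate_T_evenSeed_period : T^[2*k+4] (evenSeed k) = evenSeed k := by
  have h1k : (1:ℝ) ≤ 4^k := one_le_pow₀ (by norm_num)
  have hN : (16*4^k - 1 : ℝ) ≠ 0 := by linarith
  have hle : 8*4^k/(16*4^k - 1 : ℝ) - 1/3 ≤ 1/2 := by
    rw [sub_le_iff_le_add, div_le_iff₀ (by linarith)]; linarith
  have hreturn : 2*(8*4^k/(16*4^k - 1)) = 1 + 1/(16*4^k - 1 : ℝ) := by
    rw [← mul_div_assoc, show 2*(8*4^k) = (16*4^k - 1) + (1 : ℝ) by ring, add_div, div_self hN]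
  rw [iterate_succ_apply', iterate_T_evenSeed_exit, T_of_le hle, evenSeed]
  linarith

theorem iterate_T_evenSeed_ne_and_notMem {p : ℕ} (hp0 : 0 < p) (hp : p < 2*k+4) :
    T^[p] (evenSeed k) ≠ evenSeed k ∧ T^[p] (evenSeed k) ∉ Ioo (3/7 : ℝ) (4/7) := by
  set N : ℝ := 16 * 4^k - 1
  have h1k : (1:ℝ) ≤ 4^k := one_le_pow₀ (by norm_num)
  have hN : 0 < N := by linarith
  obtain ⟨j, rfl | rfl⟩ := Nat.even_or_odd' p
  · have hgt : evenSeed k < T^[2*j] (evenSeed k) := by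
      have h : (4:ℝ) ≤ 4^j := le_self_pow₀ (by norm_num) (by omega)
      rw [iterate_two_mul_T_evenSeed (by omega), evenSeed]
      gcongr
      linarith
    refine ⟨hgt.ne', fun hS => ?_⟩
    rw [iterate_two_mul_T_evenSeed (by omega)] at hS
    rcases Nat.lt_or_ge j (k+1) with hj | hj
    · have h : (4:ℝ)^j ≤ 4^k := pow_le_pow_right₀ (by norm_num) (by omega)
      have hle : 4^j/N ≤ 2/21 := by rw [div_le_iff₀ hN]; linarith
      linarith [hS.1]
    · obtain rfl : j = k + 1 := by omega
      have hge : 5/21 ≤ 4^(k+1)/N := by rw [le_div_iff₀ hN, pow_succ]; linarith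
      linarith [hS.2]
  · rcases Nat.lt_or_ge j (k+1) with hj | hj
    · have hge : 2/3 ≤ T^[2*j+1] (evenSeed k) := by
        have : 0 ≤ 2*4^j/N := by positivity
        rw [iterate_two_mul_add_one_T_evenSeed (by omega)]
        linarith
      have hx : evenSeed k < 2/3 := by
        have : 1/N ≤ 1/15 := by rw [div_le_div_iff₀ hN (by norm_num)]; linarith
        rw [evenSeed]; linarith
      exact ⟨(hx.trans_le hge).ne', fun hS => by linarith [hS.2]⟩
    · obtain rfl : j = k + 1 := by omega
      have hlt : 8*4^k/N - 1/3 < evenSeed k := by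
        have h : (8*4^k - 1)/N < 2/3 := by rw [div_lt_iff₀ hN]; linarith
        rw [sub_div] at h
        rw [evenSeed]
        linarith
      have hle : 8*4^k/N - 1/3 ≤ 3/7 := by
        rw [sub_le_iff_le_add, div_le_iff₀ hN]
        linarith
      rw [show 2*(k+1)+1 = 2*k+3 by ring, iterate_T_evenSeed_exit]
      exact ⟨hlt.ne, fun hS => by linarith [hS.1]⟩

theorem exists_isCycle_even : ∃ C, IsCycle (2*k+4) C ∧ C ∩ Ioo (3/7 : ℝ) (4/7) = ∅ := by
  have h1k : (1:ℝ) ≤ 4^k := one_le_pow₀ (by norm_num)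
  have hseed : 1/(16*4^k - 1 : ℝ) ≤ 1/15 := by
    rw [div_le_div_iff₀ (by linarith) (by norm_num)]; linarith
  have hx : evenSeed k < 3/7 := by rw [evenSeed]; linarith
  refine exists_isCycle_inter_eq_empty ⟨?_, ?_⟩ (by omega) iterate_T_evenSeed_period
    (fun h => h.1.not_gt hx) fun p hp0 hp => iterate_T_evenSeed_ne_and_notMem hp0 hp
  · rw [evenSeed]
    have : 0 < 1/(16*4^k - 1 : ℝ) := one_div_pos.2 (by linarith)
    linarith
  · linarith

end Even

theorem stmt_9 (n : ℕ) (hn : 3 ≤ n) :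
    ∃ C : Set ℝ, IsCycle n C ∧ C ∩ Set.Ioo (3/7 : ℝ) (4/7) = ∅ := by
  obtain ⟨k, rfl | rfl⟩ := Nat.even_or_odd' n
  · obtain ⟨m, rfl⟩ : ∃ m, k = m + 2 := ⟨k - 2, by omega⟩
    simpa only [show 2 * (m + 2) = 2 * m + 4 by ring] using exists_isCycle_even
  · exact exists_isCycle_odd (by omega)
end
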